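/- Let K be a PLCW complex, A ∈ K an n-cell, and φ : B^n → A a fixed characteristic map. Then the PLCW decomposition L of ∂B^n for which φ|_{∂B^n} : L → K^{n-1} is a regular cellular map is unique; its cells are exactly the closures of the connected components of φ^{-1}(K̊ᵢ), where Kᵢ runs over the cells of the (n−1)-skeleton K^{n-1}. -/

import Mathlib

open Set

noncomputable section

/-- `ℝ^n` modeled as `Fin n → ℝ`. -/
abbrev E (n : ℕ) : Type := Fin n → ℝ

/-- The standard `n`-ball `B^n = [-1,1]^n ⊆ ℝ^n` (cube model). -/
def Ball (n : ℕ) : Set (E n) := Set.pi Set.univ fun _ => Set.Icc (-1 : ℝ) 1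

/-- The last coordinate `x_n` of a point of `ℝ^n` (junk value `0` if `n = 0`). -/
def lastC {n : ℕ} (x : E n) : ℝ := if h : 0 < n then x ⟨n - 1, by omega⟩ else 0

/-- The upper half-ball `B^n₊ = B^n ∩ {x_n ≥ 0}`. -/
def BallPlus (n : ℕ) : Set (E n) := {x ∈ Ball n | 0 ≤ lastC x}

/-- The lower half-ball `B^n₋ = B^n ∩ {x_n ≤ 0}`. -/
def BallMinus (n : ℕ) : Set (E n) := {x ∈ Ball n | lastC x ≤ 0}

/-- The middle disk `B^n₀ = B^n ∩ {x_n = 0}`. -/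
def BallZero (n : ℕ) : Set (E n) := {x ∈ Ball n | lastC x = 0}

/-- The equator `E = S^{n-1} ∩ {x_n = 0}` of the boundary sphere `∂B^n`. -/
def Equator (n : ℕ) : Set (E n) := {x ∈ intrinsicFrontier ℝ (Ball n) | lastC x = 0}

variable {V W : Type} [NormedAddCommGroup V] [NormedSpace ℝ V]
  [NormedAddCommGroup W] [NormedSpace ℝ W]

/-- A convex cell: a nonempty compact convex polyhedron, i.e. the convex hull
of a finite set of points. -/
def IsConvexCell (C : Set V) : Prop :=
  C.Nonempty ∧ ∃ s : Finset V, C = convexHull ℝ (s : Set V)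

/-- The dimension of a subset: the rank of the direction of its affine span. -/
def setDim (C : Set V) : ℕ := Module.finrank ℝ (affineSpan ℝ C).direction

/-- `f` is piecewise linear (PL) on `X` : there is a decomposition of `X` into finitely many
convex cells on each of which `f` is affine. -/
def IsPLOn (X : Set V) (f : V → W) : Prop :=
  ∃ S : Finset (Set V), (∀ C ∈ S, IsConvexCell C) ∧ X = ⋃ C ∈ S, C ∧
    ∀ C ∈ S, ∃ g : V →ᵃ[ℝ] W, EqOn f g C

/-- `f` is a PL homeomorphism from `X` onto `Y` (with PL inverse). -/
def IsPLHomeoOn (X : Set V) (Y : Set W) (f : V → W) : Prop :=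
  IsPLOn X f ∧ BijOn f X Y ∧
    ∃ g : W → V, IsPLOn Y g ∧ (∀ x ∈ X, g (f x) = x) ∧ ∀ y ∈ Y, f (g y) = y

/-- A regular map on the ball, i.e. a characteristic map: a PL map defined on `B^n`
whose restriction to the interior of `B^n` is injective. -/
def IsCharMap (n : ℕ) (φ : E n → V) : Prop :=
  IsPLOn (Ball n) φ ∧ InjOn φ (intrinsicInterior ℝ (Ball n))

/-- A "cell datum" in `V`: a dimension, a carrier, together with a decomposition of the
carrier into an open part and a boundary part. -/
structure Cell (V : Type) where
  dim : ℕ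
  toSet : Set V
  intSet : Set V
  bdSet : Set V

/-- `φ` is a characteristic map of the cell `C`: `φ : B^n → ℝ^N` is PL and injective
on the interior of `B^n`, with `C = φ(B^n)`, `C̊ = φ(Int B^n)` and `Ċ = φ(∂B^n)`. -/
def Cell.IsCharMapOf (C : Cell V) {n : ℕ} (φ : E n → V) : Prop :=
  C.dim = n ∧ IsCharMap n φ ∧ C.toSet = φ '' Ball n ∧
    C.intSet = φ '' intrinsicInterior ℝ (Ball n) ∧
    C.bdSet = φ '' intrinsicFrontier ℝ (Ball n)

/-- `C` is a generalized cell: it admits a characteristic map. -/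
def Cell.IsGCell (C : Cell V) : Prop := ∃ φ : E C.dim → V, C.IsCharMapOf φ

/-- A generalized cell complex: a finite collection of generalized cells with pairwise
disjoint interiors, such that the boundary of each cell is a union of cells
(necessarily of smaller dimension). -/
def IsGCC (K : Set (Cell V)) : Prop :=
  K.Finite ∧ (∀ C ∈ K, C.IsGCell) ∧
    (K.Pairwise fun A B => Disjoint A.intSet B.intSet) ∧
    ∀ C ∈ K, ∃ S ⊆ K, (∀ D ∈ S, D.dim < C.dim) ∧ C.bdSet = ⋃ D ∈ S, D.toSet

/-- The support `|K|` of a complex. -/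
def gccSupport (K : Set (Cell V)) : Set V := ⋃ C ∈ K, C.toSet

/-- The dimension of a complex. -/
def gccDim (K : Set (Cell V)) : ℕ := sSup (Cell.dim '' K)

/-- The `k`-skeleton of a complex. -/
def gccSkeleton (K : Set (Cell V)) (k : ℕ) : Set (Cell V) := {C ∈ K | C.dim ≤ k}

/-- A regular cellular map `f : L → K`: a PL map of supports carrying each cell of `L`
onto a cell of `K`, in such a way that composition with any characteristic map is again
a characteristic map. -/
def IsRegularCellularMap (L : Set (Cell V)) (K : Set (Cell W)) (f : V → W) : Prop :=
  IsPLOn (gccSupport L) f ∧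
    ∀ C ∈ L, ∃ C' ∈ K, C'.toSet = f '' C.toSet ∧
      ∀ (n : ℕ) (φ : E n → V), C.IsCharMapOf φ → C'.IsCharMapOf (f ∘ φ)

/-- Auxiliary inductive definition: `IsPLCWAux n K` says that `K` is a PLCW complex of
dimension at most `n`. -/
def IsPLCWAux : (n : ℕ) → {V : Type} → [NormedAddCommGroup V] → [NormedSpace ℝ V] →
    Set (Cell V) → Prop
  | 0, _V, _, _, K => IsGCC K ∧ ∀ C ∈ K, C.dim = 0
  | n + 1, _V, _, _, K =>
      IsGCC K ∧ (∀ C ∈ K, C.dim ≤ n + 1) ∧ IsPLCWAux n (gccSkeleton K n) ∧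
      ∀ C ∈ K, C.dim = n + 1 → ∀ φ : E (n + 1) → _V, C.IsCharMapOf φ →
        ∃ L : Set (Cell (E (n + 1))), IsPLCWAux n L ∧
          gccSupport L = intrinsicFrontier ℝ (Ball (n + 1)) ∧
          IsRegularCellularMap L (gccSkeleton K n) φ

/-- `K` is a PLCW complex. -/
def IsPLCW (K : Set (Cell V)) : Prop := IsPLCWAux (gccDim K) K

/-- `L` is the pullback decomposition `φ⁻¹(K)` of `∂B^n` for an `n`-cell of `K` with
characteristic map `φ`: a PLCW decomposition of `∂B^n` such that `φ|_{∂B^n} : L → K^{n-1}`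
is a regular cellular map. -/
def IsPullbackDecomp (n : ℕ) (L : Set (Cell (E n))) (K : Set (Cell V)) (φ : E n → V) : Prop :=
  IsPLCW L ∧ gccSupport L = intrinsicFrontier ℝ (Ball n) ∧
    IsRegularCellularMap L (gccSkeleton K (n - 1)) φ

/-- The join `XY` of two subsets of `ℝ^N`: all convex combinations `a•x + b•y`,
`x ∈ X`, `y ∈ Y`, `a, b ≥ 0`, `a + b = 1`. -/
def joinSet (X Y : Set V) : Set V :=
  {p | ∃ x ∈ X, ∃ y ∈ Y, ∃ a b : ℝ, 0 ≤ a ∧ 0 ≤ b ∧ a + b = 1 ∧ p = a • x + b • y}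

/-- The open join: convex combinations with strictly positive coefficients. -/
def openJoinSet (X Y : Set V) : Set V :=
  {p | ∃ x ∈ X, ∃ y ∈ Y, ∃ a b : ℝ, 0 < a ∧ 0 < b ∧ a + b = 1 ∧ p = a • x + b • y}

/-- `X` and `Y` are independent: every point of the join `XY` is uniquely a convex
combination `a•x + b•y` of a point of `X` and a point of `Y`. -/
def JoinIndep (X Y : Set V) : Prop :=
  ∀ x₁ ∈ X, ∀ y₁ ∈ Y, ∀ x₂ ∈ X, ∀ y₂ ∈ Y, ∀ a₁ b₁ a₂ b₂ : ℝ,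
    0 ≤ a₁ → 0 ≤ b₁ → a₁ + b₁ = 1 → 0 ≤ a₂ → 0 ≤ b₂ → a₂ + b₂ = 1 →
    a₁ • x₁ + b₁ • y₁ = a₂ • x₂ + b₂ • y₂ →
    a₁ = a₂ ∧ (0 < a₁ → x₁ = x₂) ∧ (0 < b₁ → y₁ = y₂)

/-- The join of two cells. -/
def Cell.join (A B : Cell V) : Cell V :=
  ⟨A.dim + B.dim + 1, joinSet A.toSet B.toSet, openJoinSet A.intSet B.intSet,
    joinSet A.toSet B.toSet \ openJoinSet A.intSet B.intSet⟩

/-- The cell consisting of a single point. -/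
def Cell.pt (a : V) : Cell V := ⟨0, {a}, {a}, ∅⟩

/-- The image of a cell under a map. -/
def Cell.map (f : V → W) (C : Cell V) : Cell W :=
  ⟨C.dim, f '' C.toSet, f '' C.intSet, f '' C.bdSet⟩

/-- The join `KL` of two complexes: all cells of `K`, all cells of `L`, and all joins
`KᵢLⱼ` of a cell of `K` with a cell of `L`. -/
def gccJoin (K L : Set (Cell V)) : Set (Cell V) := K ∪ L ∪ Set.image2 Cell.join K L

/-- The cone `aL` over a complex `L` with vertex `a`. -/
def gccCone (a : V) (L : Set (Cell V)) : Set (Cell V) := gccJoin {Cell.pt a} L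

/-- The ball `B^n` as a cell of `ℝ^n`. -/
def ballCell (n : ℕ) : Cell (E n) :=
  ⟨n, Ball n, intrinsicInterior ℝ (Ball n), intrinsicFrontier ℝ (Ball n)⟩

/-- The upper half-ball `B^n₊` as a cell of `ℝ^n`. -/
def halfPlusCell (n : ℕ) : Cell (E n) :=
  ⟨n, BallPlus n, intrinsicInterior ℝ (BallPlus n), intrinsicFrontier ℝ (BallPlus n)⟩

/-- The lower half-ball `B^n₋` as a cell of `ℝ^n`. -/
def halfMinusCell (n : ℕ) : Cell (E n) :=
  ⟨n, BallMinus n, intrinsicInterior ℝ (BallMinus n), intrinsicFrontier ℝ (BallMinus n)⟩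

/-- The middle disk `B^n₀` as an `(n-1)`-cell of `ℝ^n`. -/
def midCell (n : ℕ) : Cell (E n) :=
  ⟨n - 1, BallZero n, intrinsicInterior ℝ (BallZero n), intrinsicFrontier ℝ (BallZero n)⟩

/-- `K'` is obtained from `K` by the radial subdivision of the cell `C = φ(B^n)`:
`C` is replaced by the cone cells `φ(O), φ(O L₁), …, φ(O L_k)`, where `L₁,…,L_k` are
the cells of the pullback decomposition `φ⁻¹(K)` of `∂B^n`. -/
def RadialSubdiv (K' K : Set (Cell V)) : Prop :=
  IsPLCW K ∧ ∃ C ∈ K, 0 < C.dim ∧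
    ∃ φ : E C.dim → V, C.IsCharMapOf φ ∧
      ∃ L : Set (Cell (E C.dim)), IsPullbackDecomp C.dim L K φ ∧
        K' = (K \ {C}) ∪
          insert (Cell.pt (φ 0)) ((fun D => Cell.map φ ((Cell.pt (0 : E C.dim)).join D)) '' L)

/-- `K'` is obtained from `K` by the elementary subdivision of the cell `C = φ(B^n)`:
assuming the equator `E ⊆ ∂B^n` is a union of cells of the pullback decomposition
`φ⁻¹(K)`, the cell `C` is replaced by the three cells
`C₊ = φ(B^n₊)`, `C₋ = φ(B^n₋)`, `C₀ = φ(B^n₀)`. -/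
def ElemSubdiv (K' K : Set (Cell V)) : Prop :=
  IsPLCW K ∧ ∃ C ∈ K, 0 < C.dim ∧
    ∃ φ : E C.dim → V, C.IsCharMapOf φ ∧
      (∃ L : Set (Cell (E C.dim)), IsPullbackDecomp C.dim L K φ ∧
        ∃ S ⊆ L, Equator C.dim = ⋃ D ∈ S, D.toSet) ∧
      K' = (K \ {C}) ∪
        {Cell.map φ (halfPlusCell C.dim), Cell.map φ (halfMinusCell C.dim),
          Cell.map φ (midCell C.dim)}

/-- `K ∼e L` : `K` can be obtained from `L` by a finite sequence of elementary
subdivisions and their inverses. -/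
def ElemEquiv (K L : Set (Cell V)) : Prop :=
  Relation.ReflTransGen (fun A B => ElemSubdiv B A ∨ ElemSubdiv A B) K L

/-- `L` is a subdivision of `K` (notation of the paper: `L ⊲ K`). -/
def IsSubdivision (L K : Set (Cell V)) : Prop :=
  IsPLCW L ∧ IsPLCW K ∧ gccSupport L = gccSupport K ∧
    ∀ C ∈ K, ∃ S ⊆ L, C.intSet = ⋃ D ∈ S, D.intSet

/-- A cell which is an honest (linearly embedded) simplex. -/
def Cell.IsSimplexCell (C : Cell V) : Prop :=
  ∃ s : Finset V, AffineIndependent ℝ (fun p : s => (p : V)) ∧ s.card = C.dim + 1 ∧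
    C.toSet = convexHull ℝ (s : Set V) ∧
    C.intSet = intrinsicInterior ℝ (convexHull ℝ (s : Set V)) ∧
    C.bdSet = intrinsicFrontier ℝ (convexHull ℝ (s : Set V))

/-- A triangulation: a finite simplicial complex, i.e. all cells are simplices, faces of
cells are cells, and the intersection of two cells is a (possibly empty) common face. -/
def IsTriangulation (T : Set (Cell V)) : Prop :=
  T.Finite ∧ (∀ C ∈ T, C.IsSimplexCell) ∧
    (∀ C ∈ T, ∀ F : Set V, F.Nonempty → IsExtreme ℝ C.toSet F → ∃ D ∈ T, D.toSet = F) ∧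
    ∀ A ∈ T, ∀ B ∈ T, (A.toSet ∩ B.toSet).Nonempty →
      IsExtreme ℝ A.toSet (A.toSet ∩ B.toSet) ∧ IsExtreme ℝ B.toSet (A.toSet ∩ B.toSet)

end

noncomputable section

/-!
A regular cellular map sends each open cell `D̊` of `L` onto the open cell `C̊` of `K^{n-1}` of
the same dimension. Over `C̊` the closed cells of `L` of that dimension cover `∂Bⁿ ∩ φ⁻¹(C̊)` and
meet it only in their open parts, which are pairwise disjoint; a connected subset of the
preimage therefore stays in one of them, and `D̊`, being connected, is a whole component of
`∂Bⁿ ∩ φ⁻¹(C̊)`. So `D = cl D̊` is determined by `φ`, and since a cell of a generalized cell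
complex is determined by its dimension and its open part (its boundary is the complement),
`L` is determined by `φ`.
-/

theorem isCompact_Ball (d : ℕ) : IsCompact (Ball d) :=
  isCompact_univ_pi fun _ => isCompact_Icc

theorem convex_Ball (d : ℕ) : Convex ℝ (Ball d) :=
  convex_pi fun _ _ => convex_Icc _ _

theorem closure_interior_Ball (d : ℕ) : closure (interior (Ball d)) = Ball d := by
  rw [Ball, interior_pi_set finite_univ, closure_pi_set]
  simp [interior_Icc, closure_Ioo (show (-1 : ℝ) ≠ 1 by norm_num)]

theorem closure_intrinsicInterior_Ball (d : ℕ) :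
    closure (intrinsicInterior ℝ (Ball d)) = Ball d :=
  subset_antisymm (closure_minimal intrinsicInterior_subset (isCompact_Ball d).isClosed)
    (by simpa only [closure_interior_Ball] using
      closure_mono (interior_subset_intrinsicInterior (𝕜 := ℝ) (s := Ball d)))

theorem isPreconnected_intrinsicInterior_Ball (d : ℕ) :
    IsPreconnected (intrinsicInterior ℝ (Ball d)) :=
  (convex_Ball d).interior.isPreconnected.subset_closure interior_subset_intrinsicInterior
    (by rw [closure_interior_Ball]; exact intrinsicInterior_subset)

theorem intrinsicInterior_union_intrinsicFrontier_Ball (d : ℕ) :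
    intrinsicInterior ℝ (Ball d) ∪ intrinsicFrontier ℝ (Ball d) = Ball d := by
  rw [intrinsicInterior_union_intrinsicFrontier, intrinsicClosure_eq_closure,
    (isCompact_Ball d).isClosed.closure_eq]

theorem IsPreconnected.subset_left_of_subset_union_of_isClosed {X : Type*} [TopologicalSpace X]
    {s a b : Set X} (hs : IsPreconnected s) (ha : IsClosed a) (hb : IsClosed b)
    (hsab : s ⊆ a ∪ b) (hdisj : s ∩ (a ∩ b) = ∅) (hsa : (s ∩ a).Nonempty) : s ⊆ a := by
  by_contra hsub
  obtain ⟨y, hys, hya⟩ := not_subset.mp hsub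
  have hsb : (s ∩ b).Nonempty := ⟨y, hys, (hsab hys).resolve_left hya⟩
  exact (isPreconnected_closed_iff.mp hs a b ha hb hsab hsa hsb).ne_empty hdisj

theorem Cell.ext {V : Type} {C D : Cell V} (hdim : C.dim = D.dim) (hto : C.toSet = D.toSet)
    (hint : C.intSet = D.intSet) (hbd : C.bdSet = D.bdSet) : C = D := by
  cases C; cases D; simp_all

section Cells

variable {V W : Type} [NormedAddCommGroup V] [NormedSpace ℝ V]
  [NormedAddCommGroup W] [NormedSpace ℝ W]

theorem IsPLOn.continuousOn [FiniteDimensional ℝ V] {X : Set V} {f : V → W} (h : IsPLOn X f) :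
    ContinuousOn f X := by
  obtain ⟨S, hcell, rfl, haff⟩ := h
  rw [← Finset.set_biUnion_coe, biUnion_eq_iUnion]
  refine (locallyFinite_of_finite _).continuousOn_iUnion (fun C => ?_) (fun C => ?_)
  · obtain ⟨-, s, hs⟩ := hcell C C.2
    exact hs ▸ (s.finite_toSet.isCompact_convexHull ℝ).isClosed
  · obtain ⟨g, hg⟩ := haff C C.2
    exact g.continuous_of_finiteDimensional.continuousOn.congr hg

namespace Cell

variable {C D : Cell V}

namespace IsGCell

theorem isClosed_toSet (h : C.IsGCell) : IsClosed C.toSet := by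
  obtain ⟨ψ, -, ⟨hPL, -⟩, hto, -⟩ := h
  exact hto ▸ ((isCompact_Ball _).image_of_continuousOn hPL.continuousOn).isClosed

theorem toSet_eq_intSet_union_bdSet (h : C.IsGCell) : C.toSet = C.intSet ∪ C.bdSet := by
  obtain ⟨ψ, -, -, hto, hint, hbd⟩ := h
  rw [hto, hint, hbd, ← image_union, intrinsicInterior_union_intrinsicFrontier_Ball]

theorem intSet_subset_toSet (h : C.IsGCell) : C.intSet ⊆ C.toSet :=
  h.toSet_eq_intSet_union_bdSet ▸ subset_union_left

theorem closure_intSet (h : C.IsGCell) : closure C.intSet = C.toSet := by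
  refine subset_antisymm (closure_minimal h.intSet_subset_toSet h.isClosed_toSet) ?_
  obtain ⟨ψ, -, ⟨hPL, -⟩, hto, hint, -⟩ := h
  have := ContinuousOn.image_closure (s := intrinsicInterior ℝ (Ball C.dim)) (f := ψ)
    (by rw [closure_intrinsicInterior_Ball]; exact hPL.continuousOn)
  rwa [closure_intrinsicInterior_Ball, ← hto, ← hint] at this

theorem intSet_nonempty (h : C.IsGCell) : C.intSet.Nonempty := by
  obtain ⟨ψ, -, -, -, hint, -⟩ := h
  have hB : (Ball C.dim).Nonempty := ⟨0, fun _ _ => by norm_num⟩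
  exact hint ▸ (hB.intrinsicInterior (convex_Ball _)).image ψ

theorem isPreconnected_intSet (h : C.IsGCell) : IsPreconnected C.intSet := by
  obtain ⟨ψ, -, ⟨hPL, -⟩, -, hint, -⟩ := h
  exact hint ▸ (isPreconnected_intrinsicInterior_Ball _).image ψ
    (hPL.continuousOn.mono intrinsicInterior_subset)

end IsGCell

end Cell

theorem IsPLCWAux.isGCC : ∀ {m : ℕ} {K : Set (Cell V)}, IsPLCWAux m K → IsGCC K
  | 0, _, h => h.1
  | _ + 1, _, h => h.1

namespace IsGCC

variable {M M' : Set (Cell V)} {C D : Cell V} {x : V}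

theorem isGCell (hM : IsGCC M) (hC : C ∈ M) : C.IsGCell := hM.2.1 C hC

theorem pairwiseDisjoint (hM : IsGCC M) : M.PairwiseDisjoint Cell.intSet := hM.2.2.1

theorem exists_mem_intSet_of_mem_toSet (hM : IsGCC M) (hC : C ∈ M) (hx : x ∈ C.toSet) :
    ∃ G ∈ M, G.dim ≤ C.dim ∧ x ∈ G.intSet := by
  induction hd : C.dim using Nat.strong_induction_on generalizing C with
  | _ d ih =>
    rcases (hM.isGCell hC).toSet_eq_intSet_union_bdSet ▸ hx with hx | hx
    · exact ⟨C, hC, hd.le, hx⟩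
    obtain ⟨S, hSM, hSdim, hbd⟩ := hM.2.2.2 C hC
    obtain ⟨F, hF, hxF⟩ := mem_iUnion₂.mp (hbd ▸ hx)
    obtain ⟨G, hG, hGF, hxG⟩ := ih F.dim (hd ▸ hSdim F hF) (hSM hF) hxF rfl
    exact ⟨G, hG, hd ▸ hGF.trans (hSdim F hF).le, hxG⟩

theorem exists_mem_intSet_of_mem_bdSet (hM : IsGCC M) (hC : C ∈ M) (hx : x ∈ C.bdSet) :
    ∃ G ∈ M, G.dim < C.dim ∧ x ∈ G.intSet := by
  obtain ⟨S, hSM, hSdim, hbd⟩ := hM.2.2.2 C hC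
  obtain ⟨F, hF, hxF⟩ := mem_iUnion₂.mp (hbd ▸ hx)
  obtain ⟨G, hG, hGF, hxG⟩ := hM.exists_mem_intSet_of_mem_toSet (hSM hF) hxF
  exact ⟨G, hG, hGF.trans_lt (hSdim F hF), hxG⟩

theorem notMem_bdSet_of_mem_intSet (hM : IsGCC M) (hC : C ∈ M) (hD : D ∈ M)
    (hdim : C.dim ≤ D.dim) (hx : x ∈ D.intSet) : x ∉ C.bdSet := fun hxC => by
  obtain ⟨G, hG, hGC, hxG⟩ := hM.exists_mem_intSet_of_mem_bdSet hC hxC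
  have hGD : G = D := hM.pairwiseDisjoint.elim_set hG hD x hxG hx
  exact (hGD ▸ hGC).not_ge hdim

theorem bdSet_eq_toSet_diff_intSet (hM : IsGCC M) (hC : C ∈ M) :
    C.bdSet = C.toSet \ C.intSet := by
  ext x
  rw [(hM.isGCell hC).toSet_eq_intSet_union_bdSet]
  constructor
  · exact fun hx => ⟨Or.inr hx, fun hxi => hM.notMem_bdSet_of_mem_intSet hC hC le_rfl hxi hx⟩
  · rintro ⟨hx | hx, hxi⟩
    exacts [absurd hx hxi, hx]

theorem intSet_subset_gccSupport (hM : IsGCC M) (hC : C ∈ M) : C.intSet ⊆ gccSupport M :=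
  fun _ hx => mem_biUnion hC ((hM.isGCell hC).intSet_subset_toSet hx)

theorem exists_mem_intSet_of_mem_gccSupport (hM : IsGCC M) (hx : x ∈ gccSupport M) :
    ∃ C ∈ M, x ∈ C.intSet := by
  obtain ⟨C, hC, hxC⟩ := mem_iUnion₂.mp hx
  obtain ⟨G, hG, -, hxG⟩ := hM.exists_mem_intSet_of_mem_toSet hC hxC
  exact ⟨G, hG, hxG⟩

theorem eq_of_intSet_eq (hM : IsGCC M) (hM' : IsGCC M') (hC : C ∈ M) (hD : D ∈ M')
    (hdim : C.dim = D.dim) (hint : C.intSet = D.intSet) : C = D := by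
  have hto : C.toSet = D.toSet := by
    rw [← (hM.isGCell hC).closure_intSet, ← (hM'.isGCell hD).closure_intSet, hint]
  refine Cell.ext hdim hto hint ?_
  rw [hM.bdSet_eq_toSet_diff_intSet hC, hM'.bdSet_eq_toSet_diff_intSet hD, hto, hint]

end IsGCC

namespace IsRegularCellularMap

variable {L L₁ L₂ : Set (Cell V)} {K : Set (Cell W)} {f : V → W} {D : Cell V} {C : Cell W}
  {x : V}

theorem exists_image_intSet_eq (hf : IsRegularCellularMap L K f) (hD : D ∈ L)
    (hDg : D.IsGCell) : ∃ C ∈ K, f '' D.intSet = C.intSet ∧ C.dim = D.dim := by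
  obtain ⟨ψ, hψ⟩ := hDg
  obtain ⟨C, hC, -, hchar⟩ := hf.2 D hD
  obtain ⟨hdim, -, -, hint, -⟩ := hchar D.dim ψ hψ
  exact ⟨C, hC, by rw [hint, hψ.2.2.2.1, image_comp], hdim⟩

theorem image_intSet_eq_of_mem (hf : IsRegularCellularMap L K f)
    (hK : K.PairwiseDisjoint Cell.intSet) (hD : D ∈ L) (hDg : D.IsGCell) (hx : x ∈ D.intSet)
    (hC : C ∈ K) (hfx : f x ∈ C.intSet) : f '' D.intSet = C.intSet ∧ C.dim = D.dim := by
  obtain ⟨C', hC', him, hdim⟩ := hf.exists_image_intSet_eq hD hDg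
  obtain rfl : C' = C := hK.elim_set hC' hC (f x) (him ▸ mem_image_of_mem f hx) hfx
  exact ⟨him, hdim⟩

theorem exists_mem_intSet_of_mem_preimage (hf : IsRegularCellularMap L K f) (hL : IsGCC L)
    (hK : K.PairwiseDisjoint Cell.intSet) (hC : C ∈ K)
    (hx : x ∈ gccSupport L ∩ f ⁻¹' C.intSet) : ∃ D ∈ L, D.dim = C.dim ∧ x ∈ D.intSet := by
  obtain ⟨D, hD, hxD⟩ := hL.exists_mem_intSet_of_mem_gccSupport hx.1
  exact ⟨D, hD, (hf.image_intSet_eq_of_mem hK hD (hL.isGCell hD) hxD hC hx.2).2.symm, hxD⟩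

-- The boundary of `D` is covered by open cells of lower dimension, whereas every point over `C̊`
-- lies in an open cell of dimension `C.dim`.
theorem mem_intSet_of_mem_toSet (hf : IsRegularCellularMap L K f) (hL : IsGCC L)
    (hK : K.PairwiseDisjoint Cell.intSet) (hC : C ∈ K) (hD : D ∈ L) (hdim : D.dim = C.dim)
    (hx : x ∈ gccSupport L ∩ f ⁻¹' C.intSet) (hxD : x ∈ D.toSet) : x ∈ D.intSet := by
  obtain ⟨D', hD', hdim', hxD'⟩ := hf.exists_mem_intSet_of_mem_preimage hL hK hC hx
  rcases (hL.isGCell hD).toSet_eq_intSet_union_bdSet ▸ hxD with h | h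
  · exact h
  · exact absurd h (hL.notMem_bdSet_of_mem_intSet hD hD' (hdim.trans hdim'.symm).le hxD')

theorem connectedComponentIn_eq_intSet (hf : IsRegularCellularMap L K f) (hL : IsGCC L)
    (hK : K.PairwiseDisjoint Cell.intSet) (hD : D ∈ L) (hx : x ∈ D.intSet) (hC : C ∈ K)
    (hfx : f x ∈ C.intSet) : connectedComponentIn (gccSupport L ∩ f ⁻¹' C.intSet) x = D.intSet := by
  set U := gccSupport L ∩ f ⁻¹' C.intSet
  have hDg := hL.isGCell hD
  obtain ⟨him, hdim⟩ := hf.image_intSet_eq_of_mem hK hD hDg hx hC hfx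
  have hDU : D.intSet ⊆ U := fun y hy =>
    ⟨hL.intSet_subset_gccSupport hD hy, him ▸ mem_image_of_mem f hy⟩
  refine subset_antisymm ?_ (hDg.isPreconnected_intSet.subset_connectedComponentIn hx hDU)
  set t := connectedComponentIn U x
  have htU : t ⊆ U := connectedComponentIn_subset U x
  have hmem : ∀ D' ∈ L, D'.dim = C.dim → ∀ y ∈ t, y ∈ D'.toSet → y ∈ D'.intSet :=
    fun D' hD' hdim' y hy => hf.mem_intSet_of_mem_toSet hL hK hC hD' hdim' (htU hy)
  have htD : t ⊆ D.toSet := by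
    refine isPreconnected_connectedComponentIn.subset_left_of_subset_union_of_isClosed
      (b := ⋃ D' ∈ {D' ∈ L | D'.dim = C.dim ∧ D' ≠ D}, D'.toSet) hDg.isClosed_toSet
      ((hL.1.subset fun _ h => h.1).isClosed_biUnion fun D' hD' =>
        (hL.isGCell hD'.1).isClosed_toSet)
      (fun y hy => ?_) ?_
      ⟨x, mem_connectedComponentIn (hDU hx), hDg.intSet_subset_toSet hx⟩
    · obtain ⟨D', hD', hdim', hyD'⟩ := hf.exists_mem_intSet_of_mem_preimage hL hK hC (htU hy)
      by_cases h : D' = D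
      · exact Or.inl (h ▸ (hL.isGCell hD').intSet_subset_toSet hyD')
      · exact Or.inr (mem_biUnion ⟨hD', hdim', h⟩ ((hL.isGCell hD').intSet_subset_toSet hyD'))
    · refine eq_empty_of_forall_notMem fun y ⟨hy, hyD, hyD'⟩ => ?_
      obtain ⟨D', ⟨hD', hdim', hne⟩, hyD'⟩ := mem_iUnion₂.mp hyD'
      exact hne (hL.pairwiseDisjoint.elim_set hD' hD y (hmem D' hD' hdim' y hy hyD')
        (hmem D hD hdim.symm y hy hyD))
  exact fun y hy => hmem D hD hdim.symm y hy (htD hy)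

theorem toSet_eq_closure_connectedComponentIn (hf : IsRegularCellularMap L K f)
    (hL : IsGCC L) (hK : K.PairwiseDisjoint Cell.intSet) (hD : D ∈ L) (hx : x ∈ D.intSet)
    (hC : C ∈ K) (hfx : f x ∈ C.intSet) :
    D.toSet = closure (connectedComponentIn (gccSupport L ∩ f ⁻¹' C.intSet) x) := by
  rw [hf.connectedComponentIn_eq_intSet hL hK hD hx hC hfx, (hL.isGCell hD).closure_intSet]

theorem subset_of_gccSupport_eq (hf₁ : IsRegularCellularMap L₁ K f)
    (hf₂ : IsRegularCellularMap L₂ K f) (hL₁ : IsGCC L₁) (hL₂ : IsGCC L₂)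
    (hK : K.PairwiseDisjoint Cell.intSet) (hsupp : gccSupport L₁ = gccSupport L₂) :
    L₁ ⊆ L₂ := by
  intro D hD
  obtain ⟨x, hx⟩ := (hL₁.isGCell hD).intSet_nonempty
  obtain ⟨C, hC, him, hdim⟩ := hf₁.exists_image_intSet_eq hD (hL₁.isGCell hD)
  have hfx : f x ∈ C.intSet := him ▸ mem_image_of_mem f hx
  obtain ⟨D', hD', hxD'⟩ :=
    hL₂.exists_mem_intSet_of_mem_gccSupport (hsupp ▸ hL₁.intSet_subset_gccSupport hD hx)
  have hint : D.intSet = D'.intSet := by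
    rw [← hf₁.connectedComponentIn_eq_intSet hL₁ hK hD hx hC hfx,
      ← hf₂.connectedComponentIn_eq_intSet hL₂ hK hD' hxD' hC hfx, hsupp]
  have hdim' : D.dim = D'.dim :=
    hdim.symm.trans (hf₂.image_intSet_eq_of_mem hK hD' (hL₂.isGCell hD') hxD' hC hfx).2
  exact hL₁.eq_of_intSet_eq hL₂ hD hD' hdim' hint ▸ hD'

end IsRegularCellularMap

end Cells

theorem pullback_decomposition_unique_general {N n : ℕ}
    (K : Set (Cell (E N))) (hK : IsPLCW K)
    (φ : E n → E N) :
    (∀ L₁ L₂ : Set (Cell (E n)),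
        IsPullbackDecomp n L₁ K φ → IsPullbackDecomp n L₂ K φ → L₁ = L₂) ∧
    ∀ L : Set (Cell (E n)), IsPullbackDecomp n L K φ →
      (∀ D ∈ L, ∃ Ki ∈ gccSkeleton K (n - 1),
          ∃ x ∈ intrinsicFrontier ℝ (Ball n) ∩ φ ⁻¹' Ki.intSet,
            D.toSet =
              closure (connectedComponentIn (intrinsicFrontier ℝ (Ball n) ∩ φ ⁻¹' Ki.intSet) x)) ∧
      (∀ Ki ∈ gccSkeleton K (n - 1),
          ∀ x ∈ intrinsicFrontier ℝ (Ball n) ∩ φ ⁻¹' Ki.intSet,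
            ∃ D ∈ L,
              D.toSet =
                closure (connectedComponentIn (intrinsicFrontier ℝ (Ball n) ∩ φ ⁻¹' Ki.intSet) x)) := by
  have hKd : (gccSkeleton K (n - 1)).PairwiseDisjoint Cell.intSet :=
    (IsPLCWAux.isGCC hK).pairwiseDisjoint.subset (sep_subset _ _)
  refine ⟨fun L₁ L₂ ⟨h₁, hs₁, hf₁⟩ ⟨h₂, hs₂, hf₂⟩ => ?_, fun L ⟨hL, hs, hf⟩ => ?_⟩
  · exact subset_antisymm
      (hf₁.subset_of_gccSupport_eq hf₂ h₁.isGCC h₂.isGCC hKd (hs₁.trans hs₂.symm))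
      (hf₂.subset_of_gccSupport_eq hf₁ h₂.isGCC h₁.isGCC hKd (hs₂.trans hs₁.symm))
  rw [← hs]
  refine ⟨fun D hD => ?_, fun C hC x hx => ?_⟩
  · obtain ⟨x, hx⟩ := (hL.isGCC.isGCell hD).intSet_nonempty
    obtain ⟨C, hC, him, -⟩ := hf.exists_image_intSet_eq hD (hL.isGCC.isGCell hD)
    have hfx : φ x ∈ C.intSet := him ▸ mem_image_of_mem φ hx
    exact ⟨C, hC, x, ⟨hL.isGCC.intSet_subset_gccSupport hD hx, hfx⟩,
      hf.toSet_eq_closure_connectedComponentIn hL.isGCC hKd hD hx hC hfx⟩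
  · obtain ⟨D, hD, hxD⟩ := hL.isGCC.exists_mem_intSet_of_mem_gccSupport hx.1
    exact ⟨D, hD, hf.toSet_eq_closure_connectedComponentIn hL.isGCC hKd hD hxD hC hx.2⟩

/-- For an `n`-cell `A` of a PLCW complex `K` and a fixed characteristic map
`φ : B^n → A`, the PLCW decomposition `L` of `∂B^n` for which `φ|_{∂B^n} : L → K^{n-1}`
is a regular cellular map is unique; its cells are exactly the closures of the connected
components of `φ⁻¹(K̊ᵢ)`, where `Kᵢ` runs over the cells of the `(n−1)`-skeleton. -/
theorem pullback_decomposition_unique {N n : ℕ} (hn : 0 < n)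
    (K : Set (Cell (E N))) (hK : IsPLCW K)
    (A : Cell (E N)) (hA : A ∈ K) (hdim : A.dim = n)
    (φ : E n → E N) (hφ : A.IsCharMapOf φ) :
    (∀ L₁ L₂ : Set (Cell (E n)),
        IsPullbackDecomp n L₁ K φ → IsPullbackDecomp n L₂ K φ → L₁ = L₂) ∧
    ∀ L : Set (Cell (E n)), IsPullbackDecomp n L K φ →
      (∀ D ∈ L, ∃ Ki ∈ gccSkeleton K (n - 1),
          ∃ x ∈ intrinsicFrontier ℝ (Ball n) ∩ φ ⁻¹' Ki.intSet,
            D.toSet =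
              closure (connectedComponentIn (intrinsicFrontier ℝ (Ball n) ∩ φ ⁻¹' Ki.intSet) x)) ∧
      (∀ Ki ∈ gccSkeleton K (n - 1),
          ∀ x ∈ intrinsicFrontier ℝ (Ball n) ∩ φ ⁻¹' Ki.intSet,
            ∃ D ∈ L,
              D.toSet =
                closure (connectedComponentIn (intrinsicFrontier ℝ (Ball n) ∩ φ ⁻¹' Ki.intSet) x)) :=
  pullback_decomposition_unique_general K hK φ
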